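/- arXiv:2303.16502 — 4 statements merged into one kernel-verified Lean document; each statement's English description precedes it below -/
import Mathlib

section
/- Let {r_k}, {s_k} be sequences of nonnegative reals, and let γ, μ, A, B, C, ρ, M, D₁, D₂ ≥ 0 with ρ ≤ 1, M > B/ρ, γ ≤ min(1/μ, 1/(A + C·M)). Suppose there is a nonnegative sequence {F_k} such that r_{k+1} ≤ (1 − γμ)r_k + Bγ²s_k + D₁γ² − 2γ(1 − Aγ)F_k and s_{k+1} ≤ (1 − ρ)s_k + 2C·F_k + D₂. Then with V_k = r_k + Mγ²s_k, V_{k+1} ≤ (1 − min(γμ, ρ − B/M)) V_k + (D₁ + M D₂)γ². -/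
/-!
Adding `M γ²` times the recursion for `s` to the recursion for `r` turns the `B γ² s_k` term into a
`B / M` share of the new `s`-weight, so `s_k` contracts by `1 - (ρ - B / M)`, and collects the `F_k`
terms into `-2γ (1 - γ (A + C M)) F_k`, which the step-size bound makes nonpositive. Both weights
then contract at least by the smaller of the two rates.
-/

theorem mul_le_one_of_le_one_div {α : Type*} [Field α] [LinearOrder α] [IsStrictOrderedRing α]
    {x a : α} (hx : 0 ≤ x) (h : x ≤ 1 / a) : x * a ≤ 1 := by
  rcases lt_trichotomy a 0 with ha | rfl | ha
  · have : 1 / a < 0 := one_div_neg.2 ha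
    linarith
  · simp
  · rwa [← le_div_iff₀ ha]

theorem one_sub_mul_add_one_sub_mul_le_one_sub_min_mul {α : Type*} [CommRing α] [LinearOrder α]
    [IsStrictOrderedRing α] {a b x y : α} (hx : 0 ≤ x) (hy : 0 ≤ y) :
    (1 - a) * x + (1 - b) * y ≤ (1 - min a b) * (x + y) := by
  have ha := min_le_left a b
  have hb := min_le_right a b
  nlinarith

theorem lyapunov_combination {r r' s s' F γ μ A B C ρ M D₁ D₂ : ℝ} (hM : 0 < M)
    (h₁ : r' ≤ (1 - γ * μ) * r + B * γ ^ 2 * s + D₁ * γ ^ 2 - 2 * γ * (1 - A * γ) * F)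
    (h₂ : s' ≤ (1 - ρ) * s + 2 * C * F + D₂) :
    r' + M * γ ^ 2 * s' ≤ (1 - γ * μ) * r + (1 - (ρ - B / M)) * (M * γ ^ 2 * s)
      + (D₁ + M * D₂) * γ ^ 2 - 2 * γ * (1 - γ * (A + C * M)) * F :=
  calc r' + M * γ ^ 2 * s'
      ≤ (1 - γ * μ) * r + B * γ ^ 2 * s + D₁ * γ ^ 2 - 2 * γ * (1 - A * γ) * F
        + M * γ ^ 2 * ((1 - ρ) * s + 2 * C * F + D₂) :=
        add_le_add h₁ (mul_le_mul_of_nonneg_left h₂ (by positivity))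
    _ = (1 - γ * μ) * r + (1 - (ρ - B / M)) * (M * γ ^ 2 * s)
      + (D₁ + M * D₂) * γ ^ 2 - 2 * γ * (1 - γ * (A + C * M)) * F := by
        field_simp
        ring

theorem unified_one_step_general (r s F : ℕ → ℝ) (γ μ A B C ρ M D₁ D₂ : ℝ)
    (hr : ∀ k, 0 ≤ r k) (hs : ∀ k, 0 ≤ s k) (hF : ∀ k, 0 ≤ F k)
    (hγ : 0 ≤ γ) (hB : 0 ≤ B) (hρ0 : 0 ≤ ρ)
    (hM : M > B / ρ) (hγle : γ ≤ min (1 / μ) (1 / (A + C * M)))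
    (hrec1 : ∀ k, r (k + 1) ≤ (1 - γ * μ) * r k + B * γ ^ 2 * s k + D₁ * γ ^ 2
      - 2 * γ * (1 - A * γ) * F k)
    (hrec2 : ∀ k, s (k + 1) ≤ (1 - ρ) * s k + 2 * C * F k + D₂) :
    ∀ k, r (k + 1) + M * γ ^ 2 * s (k + 1) ≤
      (1 - min (γ * μ) (ρ - B / M)) * (r k + M * γ ^ 2 * s k) + (D₁ + M * D₂) * γ ^ 2 := by
  intro k
  have hMpos : 0 < M := (div_nonneg hB hρ0).trans_lt hM
  have hγAC : γ * (A + C * M) ≤ 1 := mul_le_one_of_le_one_div hγ (hγle.trans (min_le_right _ _))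
  have hFterm : 0 ≤ 2 * γ * (1 - γ * (A + C * M)) * F k :=
    mul_nonneg (mul_nonneg (by positivity) (sub_nonneg.2 hγAC)) (hF k)
  calc r (k + 1) + M * γ ^ 2 * s (k + 1)
      ≤ (1 - γ * μ) * r k + (1 - (ρ - B / M)) * (M * γ ^ 2 * s k)
        + (D₁ + M * D₂) * γ ^ 2 - 2 * γ * (1 - γ * (A + C * M)) * F k :=
        lyapunov_combination hMpos (hrec1 k) (hrec2 k)
    _ ≤ (1 - γ * μ) * r k + (1 - (ρ - B / M)) * (M * γ ^ 2 * s k) + (D₁ + M * D₂) * γ ^ 2 := by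
        linarith
    _ ≤ _ := by
        gcongr
        exact one_sub_mul_add_one_sub_mul_le_one_sub_min_mul (hr k) (by have := hs k; positivity)

theorem unified_one_step (r s F : ℕ → ℝ) (γ μ A B C ρ M D₁ D₂ : ℝ)
    (hr : ∀ k, 0 ≤ r k) (hs : ∀ k, 0 ≤ s k) (hF : ∀ k, 0 ≤ F k)
    (hγ : 0 ≤ γ) (hμ : 0 ≤ μ) (hA : 0 ≤ A) (hB : 0 ≤ B) (hC : 0 ≤ C)
    (hρ0 : 0 ≤ ρ) (hρ1 : ρ ≤ 1) (hM0 : 0 ≤ M) (hD₁ : 0 ≤ D₁) (hD₂ : 0 ≤ D₂)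
    (hM : M > B / ρ) (hγle : γ ≤ min (1 / μ) (1 / (A + C * M)))
    (hrec1 : ∀ k, r (k + 1) ≤ (1 - γ * μ) * r k + B * γ ^ 2 * s k + D₁ * γ ^ 2
      - 2 * γ * (1 - A * γ) * F k)
    (hrec2 : ∀ k, s (k + 1) ≤ (1 - ρ) * s k + 2 * C * F k + D₂) :
    ∀ k, r (k + 1) + M * γ ^ 2 * s (k + 1) ≤
      (1 - min (γ * μ) (ρ - B / M)) * (r k + M * γ ^ 2 * s k) + (D₁ + M * D₂) * γ ^ 2 :=
  unified_one_step_general r s F γ μ A B C ρ M D₁ D₂ hr hs hF hγ hB hρ0 hM hγle hrec1 hrec2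
end

section
/- LSVRG second-moment bound: with f = (1/n)∑ f_i, each f_i convex differentiable and L_max-smooth, x* a minimizer of f, and any points x, w ∈ ℝ^d, the quantity (1/n)∑_i ‖∇f_i(x) − ∇f_i(w) + ∇f(w)‖² is at most 4 L_max (f(x) − f(x*)) + 2σ², where σ² = (1/n)∑_i ‖∇f_i(w) − ∇f_i(x*)‖². -/
open RealInnerProductSpace

section AuxLemmas

variable {E : Type*} [NormedAddCommGroup E] [InnerProductSpace ℝ E] [CompleteSpace E]

lemma aux_hasDerivAt_line (f : E → ℝ) (hf : Differentiable ℝ f) (c v : E) (t : ℝ) :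
    HasDerivAt (fun s : ℝ => f (c + s • v)) ⟪gradient f (c + t • v), v⟫ t := by
  have h1 : HasDerivAt (fun s : ℝ => c + s • v) v t := by
    simpa using ((hasDerivAt_id t).smul_const v).const_add c
  have h2 : HasFDerivAt f ((InnerProductSpace.toDual ℝ E) (gradient f (c + t • v))) (c + t • v) :=
    hasGradientAt_iff_hasFDerivAt.mp (hf _).hasGradientAt
  simpa [InnerProductSpace.toDual_apply_apply, Function.comp_def] using h2.comp_hasDerivAt t h1

lemma aux_first_order (f : E → ℝ) (hc : ConvexOn ℝ Set.univ f) (hf : Differentiable ℝ f)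
    (x y : E) : f x + ⟪gradient f x, y - x⟫ ≤ f y := by
  set v := y - x with hv
  have hder : HasDerivAt (fun s : ℝ => f (x + s • v)) ⟪gradient f x, v⟫ 0 := by
    have := aux_hasDerivAt_line f hf x v 0
    simpa using this
  have hslope : Filter.Tendsto (slope (fun s : ℝ => f (x + s • v)) 0) (nhdsWithin 0 (Set.Ioi 0))
      (nhds ⟪gradient f x, v⟫) :=
    (hasDerivAt_iff_tendsto_slope.mp hder).mono_left
      (nhdsWithin_mono _ (fun t ht => ne_of_gt ht))
  have hbound : ∀ t ∈ Set.Ioc (0:ℝ) 1, slope (fun s : ℝ => f (x + s • v)) 0 t ≤ f y - f x := by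
    intro t ht
    have h01 : x + t • v = (1 - t) • x + t • y := by
      rw [hv]; rw [smul_sub]; module
    have hle : f (x + t • v) ≤ (1 - t) * f x + t * f y := by
      rw [h01]
      exact hc.2 (Set.mem_univ x) (Set.mem_univ y) (by linarith [ht.2]) (le_of_lt ht.1) (by ring)
    have hs : slope (fun s : ℝ => f (x + s • v)) 0 t = (f (x + t • v) - f x) / t := by
      simp [slope_def_field]
    rw [hs, div_le_iff₀ ht.1]
    nlinarith [hle]
  have := le_of_tendsto hslope
    (Filter.eventually_of_mem (Ioc_mem_nhdsGT_of_mem ⟨le_refl 0, one_pos⟩) hbound)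
  linarith


lemma aux_descent (f : E → ℝ) (hf : Differentiable ℝ f) (L : ℝ) (hL0 : 0 ≤ L)
    (hL : ∀ a b : E, ‖gradient f a - gradient f b‖ ≤ L * ‖a - b‖) (x y : E) :
    f y ≤ f x + ⟪gradient f x, y - x⟫ + L / 2 * ‖y - x‖ ^ 2 := by
  set v := y - x with hv
  set φ' : ℝ → ℝ := fun t => ⟪gradient f (x + t • v), v⟫ with hφ'
  have hder : ∀ t ∈ Set.uIcc (0:ℝ) 1, HasDerivAt (fun s : ℝ => f (x + s • v)) (φ' t) t :=
    fun t _ => aux_hasDerivAt_line f hf x v t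
  have hgradcont : Continuous (gradient f) := by
    have hlip : LipschitzWith (Real.toNNReal L) (gradient f) := by
      apply LipschitzWith.of_dist_le_mul
      intro a b
      rw [dist_eq_norm, dist_eq_norm]
      calc ‖gradient f a - gradient f b‖ ≤ L * ‖a - b‖ := hL a b
        _ = (Real.toNNReal L : ℝ) * ‖a - b‖ := by rw [Real.coe_toNNReal L hL0]
    exact hlip.continuous
  have hcont : Continuous φ' := by
    apply Continuous.inner
    · exact hgradcont.comp (by continuity)
    · exact continuous_const
  have hint : IntervalIntegrable φ' MeasureTheory.volume 0 1 :=
    hcont.intervalIntegrable 0 1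
  have hftc : ∫ t in (0:ℝ)..1, φ' t = f (x + (1:ℝ) • v) - f (x + (0:ℝ) • v) :=
    intervalIntegral.integral_eq_sub_of_hasDerivAt hder hint
  have hbound : ∀ t ∈ Set.Icc (0:ℝ) 1, φ' t ≤ φ' 0 + L * ‖v‖ ^ 2 * t := by
    intro t ht
    have h1 : φ' t - φ' 0 = ⟪gradient f (x + t • v) - gradient f x, v⟫ := by
      simp [hφ', inner_sub_left]
    have h2 : ⟪gradient f (x + t • v) - gradient f x, v⟫
        ≤ ‖gradient f (x + t • v) - gradient f x‖ * ‖v‖ :=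
      real_inner_le_norm _ _
    have h3 : ‖gradient f (x + t • v) - gradient f x‖ ≤ L * (t * ‖v‖) := by
      have h := hL (x + t • v) x
      have he : x + t • v - x = t • v := by abel
      rw [he, norm_smul, Real.norm_eq_abs, abs_of_nonneg ht.1] at h
      linarith [h]
    nlinarith [mul_le_mul_of_nonneg_right h3 (norm_nonneg v)]
  have hmono : ∫ t in (0:ℝ)..1, φ' t ≤ ∫ t in (0:ℝ)..1, (φ' 0 + L * ‖v‖ ^ 2 * t) := by
    apply intervalIntegral.integral_mono_on zero_le_one hint
      (by apply Continuous.intervalIntegrable; continuity)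
    exact hbound
  have hval : ∫ t in (0:ℝ)..1, (φ' 0 + L * ‖v‖ ^ 2 * t) = φ' 0 + L * ‖v‖ ^ 2 / 2 := by
    rw [intervalIntegral.integral_add intervalIntegrable_const
      (by apply Continuous.intervalIntegrable; continuity)]
    rw [intervalIntegral.integral_const_mul, integral_id]
    simp; ring
  have e1 : x + (1:ℝ) • v = y := by rw [hv]; simp
  have e0 : x + (0:ℝ) • v = x := by simp
  have hφ'0 : φ' 0 = ⟪gradient f x, v⟫ := by simp [hφ']
  rw [e1, e0] at hftc
  rw [hφ'0] at hmono hval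
  linarith [hftc, hmono, hval]

lemma aux_cocoercive (f : E → ℝ) (hc : ConvexOn ℝ Set.univ f) (hf : Differentiable ℝ f)
    (L : ℝ) (hL0 : 0 ≤ L) (hL : ∀ a b : E, ‖gradient f a - gradient f b‖ ≤ L * ‖a - b‖)
    (x y : E) :
    ‖gradient f x - gradient f y‖ ^ 2 ≤ 2 * L * (f x - f y - ⟪gradient f y, x - y⟫) := by
  rcases eq_or_lt_of_le hL0 with h0 | hpos
  · have hu : gradient f x - gradient f y = 0 := by
      have h := hL x y
      rw [← h0] at h
      simpa using norm_le_zero_iff.mp (by linarith [h])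
    rw [hu, ← h0]; simp
  · set u := gradient f x - gradient f y with hu
    set z := x - L⁻¹ • u with hz
    have h1 := aux_first_order f hc hf y z
    have h2 := aux_descent f hf L hL0 hL x z
    have ez : z - x = -(L⁻¹ • u) := by rw [hz]; abel
    have ezy : z - y = (x - y) - L⁻¹ • u := by rw [hz]; abel
    have i1 : ⟪gradient f x, z - x⟫ = -(L⁻¹ * ⟪gradient f x, u⟫) := by
      rw [ez, inner_neg_right, real_inner_smul_right]
    have i2 : ⟪gradient f y, z - y⟫ = ⟪gradient f y, x - y⟫ - L⁻¹ * ⟪gradient f y, u⟫ := by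
      rw [ezy, inner_sub_right, real_inner_smul_right]
    have i3 : ⟪gradient f x, u⟫ - ⟪gradient f y, u⟫ = ‖u‖ ^ 2 := by
      rw [← inner_sub_left, ← hu, real_inner_self_eq_norm_sq]
    have i4 : L⁻¹ * ⟪gradient f x, u⟫ - L⁻¹ * ⟪gradient f y, u⟫ = L⁻¹ * ‖u‖ ^ 2 := by
      rw [← mul_sub, i3]
    have inz : ‖z - x‖ ^ 2 = L⁻¹ ^ 2 * ‖u‖ ^ 2 := by
      rw [ez, norm_neg, norm_smul, Real.norm_eq_abs, abs_of_nonneg (inv_nonneg.mpr hL0)]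
      ring
    rw [i2] at h1
    rw [i1, inz] at h2
    have hLne : L ≠ 0 := ne_of_gt hpos
    have hsimp : L / 2 * (L⁻¹ ^ 2 * ‖u‖ ^ 2) = (L⁻¹ / 2) * ‖u‖ ^ 2 := by
      field_simp
    rw [hsimp] at h2
    have hstep : (L⁻¹ / 2) * ‖u‖ ^ 2 ≤ f x - f y - ⟪gradient f y, x - y⟫ := by
      linarith [h1, h2, i4]
    have hmul := mul_le_mul_of_nonneg_left hstep (by linarith : (0:ℝ) ≤ 2 * L)
    have hcanc : 2 * L * ((L⁻¹ / 2) * ‖u‖ ^ 2) = ‖u‖ ^ 2 := by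
      field_simp
    rw [hcanc] at hmul
    exact hmul

end AuxLemmas

theorem lsvrg_second_moment {d n : ℕ} (hn : 0 < n)
    (fi : Fin n → EuclideanSpace ℝ (Fin d) → ℝ) (f : EuclideanSpace ℝ (Fin d) → ℝ)
    (Lmax : ℝ)
    (hconv : ∀ i, ConvexOn ℝ Set.univ (fi i)) (hdiff : ∀ i, Differentiable ℝ (fi i))
    (hL : ∀ i x y, ‖gradient (fi i) x - gradient (fi i) y‖ ≤ Lmax * ‖x - y‖)
    (hf : ∀ x, f x = (1 / n : ℝ) * ∑ i, fi i x)
    (xstar : EuclideanSpace ℝ (Fin d)) (hxstar : ∀ y, f xstar ≤ f y)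
    (x w : EuclideanSpace ℝ (Fin d)) :
    (1 / n : ℝ) * ∑ i, ‖gradient (fi i) x - gradient (fi i) w + gradient f w‖ ^ 2 ≤
      4 * Lmax * (f x - f xstar) +
        2 * ((1 / n : ℝ) * ∑ i, ‖gradient (fi i) w - gradient (fi i) xstar‖ ^ 2) := by
  have hne : (n:ℝ) ≠ 0 := Nat.cast_ne_zero.mpr hn.ne'
  have hnpos : (0:ℝ) < (n:ℝ) := Nat.cast_pos.mpr hn
  have hfun : f = fun z => (1 / n : ℝ) * ∑ i, fi i z := funext hf
  have hdf : Differentiable ℝ f := by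
    rw [hfun]
    exact (Differentiable.fun_sum fun i _ => hdiff i).const_mul _
  have hgrad : ∀ y, gradient f y = (1 / n : ℝ) • ∑ i, gradient (fi i) y := by
    intro y
    have hsum : HasFDerivAt (fun z => ∑ i, fi i z)
        (∑ i, (InnerProductSpace.toDual ℝ _) (gradient (fi i) y)) y :=
      HasFDerivAt.fun_sum fun i _ => hasGradientAt_iff_hasFDerivAt.mp ((hdiff i y).hasGradientAt)
    have hfd : HasGradientAt f ((1 / n : ℝ) • ∑ i, gradient (fi i) y) y := by
      rw [hasGradientAt_iff_hasFDerivAt, map_smul, map_sum, hfun]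
      exact hsum.const_mul _
    exact hfd.gradient
  have hgrad0 : gradient f xstar = 0 := by
    have hmin : IsLocalMin f xstar := Filter.Eventually.of_forall hxstar
    simp [gradient, hmin.fderiv_eq_zero]
  have hsumstar : ∑ i, gradient (fi i) xstar = 0 := by
    have h := (hgrad xstar).symm
    rw [hgrad0] at h
    rcases smul_eq_zero.mp h with h' | h'
    · exact absurd h' (by positivity)
    · exact h'
  have hsumw : ∑ i, gradient (fi i) w = (n:ℝ) • gradient f w := by
    rw [hgrad w, smul_smul, mul_one_div, div_self hne, one_smul]
  have hsfx : ∑ i, fi i x = (n:ℝ) * f x := by rw [hf x]; field_simp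
  have hsfxstar : ∑ i, fi i xstar = (n:ℝ) * f xstar := by rw [hf xstar]; field_simp
  rcases le_or_gt 0 Lmax with hL0 | hLneg
  · -- main case
    have key : ∀ i : Fin n, ‖gradient (fi i) x - gradient (fi i) w + gradient f w‖ ^ 2 ≤
        2 * ‖gradient (fi i) x - gradient (fi i) xstar‖ ^ 2 +
        2 * ‖gradient f w - (gradient (fi i) w - gradient (fi i) xstar)‖ ^ 2 := by
      intro i
      have hdecomp : gradient (fi i) x - gradient (fi i) w + gradient f w =
          (gradient (fi i) x - gradient (fi i) xstar) +
          (gradient f w - (gradient (fi i) w - gradient (fi i) xstar)) := by abel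
      rw [hdecomp]
      set a := gradient (fi i) x - gradient (fi i) xstar
      set b := gradient f w - (gradient (fi i) w - gradient (fi i) xstar)
      have htri := norm_add_le a b
      nlinarith [norm_nonneg a, norm_nonneg b, norm_nonneg (a + b), sq_nonneg (‖a‖ - ‖b‖)]
    have hsv : ∑ i, (gradient (fi i) w - gradient (fi i) xstar) = (n:ℝ) • gradient f w := by
      rw [Finset.sum_sub_distrib, hsumw, hsumstar, sub_zero]
    have keyvar : ∑ i, ‖gradient f w - (gradient (fi i) w - gradient (fi i) xstar)‖ ^ 2 ≤
        ∑ i, ‖gradient (fi i) w - gradient (fi i) xstar‖ ^ 2 := by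
      have hexp : ∑ i, ‖gradient f w - (gradient (fi i) w - gradient (fi i) xstar)‖ ^ 2 =
          ∑ i, (‖gradient f w‖ ^ 2 -
            2 * ⟪gradient f w, gradient (fi i) w - gradient (fi i) xstar⟫ +
            ‖gradient (fi i) w - gradient (fi i) xstar‖ ^ 2) :=
        Finset.sum_congr rfl fun i _ => norm_sub_sq_real _ _
      rw [hexp, Finset.sum_add_distrib, Finset.sum_sub_distrib, Finset.sum_const,
        Finset.card_univ, Fintype.card_fin, ← Finset.mul_sum, ← inner_sum, hsv,
        real_inner_smul_right, real_inner_self_eq_norm_sq]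
      have : (0:ℝ) ≤ (n:ℝ) * ‖gradient f w‖ ^ 2 := by positivity
      have hn2 : n • ‖gradient f w‖ ^ 2 = (n:ℝ) * ‖gradient f w‖ ^ 2 := by
        simp [nsmul_eq_mul]
      rw [hn2]
      linarith
    have keycoer : ∑ i, ‖gradient (fi i) x - gradient (fi i) xstar‖ ^ 2 ≤
        2 * Lmax * ((n:ℝ) * (f x - f xstar)) := by
      have hper : ∀ i : Fin n, ‖gradient (fi i) x - gradient (fi i) xstar‖ ^ 2 ≤
          2 * Lmax * (fi i x - fi i xstar - ⟪gradient (fi i) xstar, x - xstar⟫) := fun i =>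
        aux_cocoercive (fi i) (hconv i) (hdiff i) Lmax hL0 (hL i) x xstar
      calc ∑ i, ‖gradient (fi i) x - gradient (fi i) xstar‖ ^ 2
          ≤ ∑ i, 2 * Lmax * (fi i x - fi i xstar - ⟪gradient (fi i) xstar, x - xstar⟫) :=
            Finset.sum_le_sum fun i _ => hper i
        _ = 2 * Lmax * ((∑ i, fi i x) - (∑ i, fi i xstar) -
              ⟪∑ i, gradient (fi i) xstar, x - xstar⟫) := by
            rw [← Finset.mul_sum, Finset.sum_sub_distrib, Finset.sum_sub_distrib, sum_inner]
        _ = 2 * Lmax * ((n:ℝ) * (f x - f xstar)) := by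
            rw [hsumstar, hsfx, hsfxstar, inner_zero_left]
            ring
    have hsum2 : ∑ i, ‖gradient (fi i) x - gradient (fi i) w + gradient f w‖ ^ 2 ≤
        2 * (2 * Lmax * ((n:ℝ) * (f x - f xstar))) +
        2 * ∑ i, ‖gradient (fi i) w - gradient (fi i) xstar‖ ^ 2 := by
      calc ∑ i, ‖gradient (fi i) x - gradient (fi i) w + gradient f w‖ ^ 2
          ≤ ∑ i, (2 * ‖gradient (fi i) x - gradient (fi i) xstar‖ ^ 2 +
              2 * ‖gradient f w - (gradient (fi i) w - gradient (fi i) xstar)‖ ^ 2) :=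
            Finset.sum_le_sum fun i _ => key i
        _ = 2 * ∑ i, ‖gradient (fi i) x - gradient (fi i) xstar‖ ^ 2 +
            2 * ∑ i, ‖gradient f w - (gradient (fi i) w - gradient (fi i) xstar)‖ ^ 2 := by
            rw [Finset.sum_add_distrib, ← Finset.mul_sum, ← Finset.mul_sum]
        _ ≤ 2 * (2 * Lmax * ((n:ℝ) * (f x - f xstar))) +
            2 * ∑ i, ‖gradient (fi i) w - gradient (fi i) xstar‖ ^ 2 := by
            have h1 := keyvar
            have h2 := keycoer
            linarith
    have hfinal := mul_le_mul_of_nonneg_left hsum2 (by positivity : (0:ℝ) ≤ (1/n:ℝ))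
    have heq : (1/n:ℝ) * (2 * (2 * Lmax * ((n:ℝ) * (f x - f xstar))) +
        2 * ∑ i, ‖gradient (fi i) w - gradient (fi i) xstar‖ ^ 2) =
        4 * Lmax * (f x - f xstar) +
        2 * ((1 / n : ℝ) * ∑ i, ‖gradient (fi i) w - gradient (fi i) xstar‖ ^ 2) := by
      field_simp
      ring
    linarith [hfinal, heq.le, heq.ge]
  · -- Lmax < 0 : gradients are constant
    have hconst : ∀ (i : Fin n) (a b : EuclideanSpace ℝ (Fin d)),
        gradient (fi i) a = gradient (fi i) b := by
      intro i a b
      by_cases hab : a = b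
      · rw [hab]
      · exfalso
        have h := hL i a b
        have hpos : 0 < ‖a - b‖ := norm_pos_iff.mpr (sub_ne_zero.mpr hab)
        have : Lmax * ‖a - b‖ < 0 := mul_neg_of_neg_of_pos hLneg hpos
        linarith [norm_nonneg (gradient (fi i) a - gradient (fi i) b)]
    have hgw : gradient f w = 0 := by
      rw [hgrad w, Finset.sum_congr rfl fun i _ => hconst i w xstar, hsumstar, smul_zero]
    have hsumx : ∑ i, gradient (fi i) x = 0 := by
      rw [Finset.sum_congr rfl fun i _ => hconst i x xstar, hsumstar]
    have hfxle : f x ≤ f xstar := by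
      have hper : ∀ i : Fin n, fi i x + ⟪gradient (fi i) x, xstar - x⟫ ≤ fi i xstar := fun i =>
        aux_first_order (fi i) (hconv i) (hdiff i) x xstar
      have hsum := Finset.sum_le_sum fun i (_ : i ∈ Finset.univ) => hper i
      rw [Finset.sum_add_distrib, ← sum_inner, hsumx, inner_zero_left, add_zero,
        hsfx, hsfxstar] at hsum
      exact le_of_mul_le_mul_left (by linarith) hnpos
    have hfx : f x = f xstar := le_antisymm hfxle (hxstar x)
    have hzero1 : ∑ i, ‖gradient (fi i) x - gradient (fi i) w + gradient f w‖ ^ 2 = 0 := by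
      rw [Finset.sum_congr rfl fun i (_ : i ∈ Finset.univ) =>
        show ‖gradient (fi i) x - gradient (fi i) w + gradient f w‖ ^ 2 = 0 by
          rw [hconst i x w, hgw]; simp]
      simp
    have hzero2 : ∑ i, ‖gradient (fi i) w - gradient (fi i) xstar‖ ^ 2 = 0 := by
      rw [Finset.sum_congr rfl fun i (_ : i ∈ Finset.univ) =>
        show ‖gradient (fi i) w - gradient (fi i) xstar‖ ^ 2 = 0 by
          rw [hconst i w xstar]; simp]
      simp
    rw [hzero1, hzero2, hfx]
    simp
end

section
/- CDGD drift bound: let f = (1/n)∑ f_i with each f_i convex differentiable L_max-smooth, f L-smooth, x* a minimizer of f. Then for any x and ω ≥ 0: ‖∇f(x)‖² + (ω/n²)∑_i ‖∇f_i(x)‖² ≤ 2(L + 2ωL_max/n)(f(x) − f(x*)) + (2ω/n)ζ*², where ζ*² = (1/n)∑_i ‖∇f_i(x*)‖². -/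
open RealInnerProductSpace Set

variable {E : Type*} [NormedAddCommGroup E] [InnerProductSpace ℝ E] [CompleteSpace E]

lemma lineHasDerivAt {g : E → ℝ} (hg : Differentiable ℝ g) (x v : E) (t : ℝ) :
    HasDerivAt (fun s : ℝ => g (x + s • v)) ⟪gradient g (x + t • v), v⟫ t := by
  have hF : HasFDerivAt g ((InnerProductSpace.toDual ℝ E) (gradient g (x + t • v))) (x + t • v) :=
    ((hg (x + t • v)).hasGradientAt).hasFDerivAt
  have hline : HasDerivAt (fun s : ℝ => x + s • v) v t := by
    simpa using ((hasDerivAt_id t).smul_const v).const_add x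
  simpa [InnerProductSpace.toDual_apply_apply, Function.comp_def] using hF.comp_hasDerivAt t hline

lemma descent_lemma {g : E → ℝ} {C : ℝ} (hg : Differentiable ℝ g)
    (hL : ∀ a b, ‖gradient g a - gradient g b‖ ≤ C * ‖a - b‖) (x y : E) :
    g y ≤ g x + ⟪gradient g x, y - x⟫ + C / 2 * ‖y - x‖ ^ 2 := by
  by_cases hxy : y = x
  · simp [hxy]
  have hnorm : (0:ℝ) < ‖y - x‖ := by
    exact norm_sub_pos_iff.mpr hxy
  have hC : 0 ≤ C := by
    nlinarith [(norm_nonneg (gradient g y - gradient g x)).trans (hL y x), hnorm]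
  set v := y - x with hv
  set c := ⟪gradient g x, v⟫ with hc
  set s := ‖v‖ ^ 2 with hs
  set ψ : ℝ → ℝ := fun t => g (x + t • v) - t * c - C * s / 2 * t ^ 2 with hψdef
  have hψ : ∀ t : ℝ, HasDerivAt ψ (⟪gradient g (x + t • v), v⟫ - c - C * s * t) t := by
    intro t
    have h1 := lineHasDerivAt hg x v t
    have h2 : HasDerivAt (fun t : ℝ => t * c) c t := by
      simpa using (hasDerivAt_id t).mul_const c
    have h3 : HasDerivAt (fun t : ℝ => C * s / 2 * t ^ 2) (C * s * t) t := by
      have := (hasDerivAt_pow 2 t).const_mul (C * s / 2)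
      exact this.congr_deriv (by ring)
    exact (h1.sub h2).sub h3
  have hanti : AntitoneOn ψ (Icc (0:ℝ) 1) := by
    apply antitoneOn_of_deriv_nonpos (convex_Icc 0 1)
    · exact (Differentiable.continuous fun t => (hψ t).differentiableAt).continuousOn
    · intro t ht
      exact (hψ t).differentiableAt.differentiableWithinAt
    · intro t ht
      rw [interior_Icc] at ht
      rw [(hψ t).deriv]
      have hb := hL (x + t • v) x
      have hsub : x + t • v - x = t • v := by abel
      rw [hsub, norm_smul, Real.norm_eq_abs, abs_of_pos ht.1] at hb
      have hip : ⟪gradient g (x + t • v), v⟫ - c = ⟪gradient g (x + t • v) - gradient g x, v⟫ := by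
        rw [inner_sub_left]
      rw [hip]
      have hcs := real_inner_le_norm (gradient g (x + t • v) - gradient g x) v
      have key : ⟪gradient g (x + t • v) - gradient g x, v⟫ ≤ C * (t * ‖v‖) * ‖v‖ :=
        hcs.trans (mul_le_mul_of_nonneg_right hb (norm_nonneg v))
      have heq : C * s * t = C * (t * ‖v‖) * ‖v‖ := by rw [hs]; ring
      linarith
  have h01 := hanti (by norm_num : (0:ℝ) ∈ Icc (0:ℝ) 1) (by norm_num : (1:ℝ) ∈ Icc (0:ℝ) 1)
    zero_le_one
  have hψ0 : ψ 0 = g x := by simp [hψdef]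
  have hψ1 : ψ 1 = g y - c - C * s / 2 := by simp [hψdef, hv]
  rw [hψ0, hψ1] at h01
  simp only [hv, hc, hs] at *
  linarith
lemma convex_grad_ineq {g : E → ℝ} (hconv : ConvexOn ℝ univ g) (hg : Differentiable ℝ g)
    (x y : E) : g x + ⟪gradient g x, y - x⟫ ≤ g y := by
  set φ : ℝ → ℝ := fun t => g (x + t • (y - x)) with hφ
  have hφconv : ConvexOn ℝ univ φ := by
    have := hconv.comp_affineMap (AffineMap.lineMap x y)
    have heq : φ = g ∘ (AffineMap.lineMap x y) := by
      funext t
      simp [hφ, AffineMap.lineMap_apply, add_comm]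
    rw [heq]
    simpa using this
  have hder : HasDerivAt φ ⟪gradient g x, y - x⟫ 0 := by
    simpa using lineHasDerivAt hg x (y - x) 0
  have := hφconv.le_slope_of_hasDerivAt (mem_univ (0:ℝ)) (mem_univ (1:ℝ)) one_pos hder
  have hslope : slope φ 0 1 = g y - g x := by
    simp [slope_def_field, hφ]
  rw [hslope] at this
  linarith

lemma gradient_min_zero {g : E → ℝ} {xstar : E}
    (hmin : ∀ y, g xstar ≤ g y) : gradient g xstar = 0 := by
  have hloc : IsLocalMin g xstar := Filter.Eventually.of_forall hmin
  simp [gradient, hloc.fderiv_eq_zero]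

lemma coco {g : E → ℝ} {C : ℝ} (hconv : ConvexOn ℝ univ g) (hg : Differentiable ℝ g)
    (hL : ∀ a b, ‖gradient g a - gradient g b‖ ≤ C * ‖a - b‖) (x y : E) :
    ‖gradient g x - gradient g y‖ ^ 2 ≤
      2 * C * (g x - g y - ⟪gradient g y, x - y⟫) := by
  rcases le_or_gt C 0 with hC | hC
  · have hgeq : ∀ a b : E, gradient g a = gradient g b := by
      intro a b
      have h1 := hL a b
      have h2 : C * ‖a - b‖ ≤ 0 := mul_nonpos_of_nonpos_of_nonneg hC (norm_nonneg _)
      have : ‖gradient g a - gradient g b‖ ≤ 0 := h1.trans h2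
      have := le_antisymm this (norm_nonneg _)
      rwa [norm_eq_zero, sub_eq_zero] at this
    have hD1 := convex_grad_ineq hconv hg y x
    have hD2 := convex_grad_ineq hconv hg x y
    have hxy2 : ⟪gradient g x, y - x⟫ = -⟪gradient g y, x - y⟫ := by
      rw [hgeq x y, ← neg_sub x y, inner_neg_right]
    have hD : g x - g y - ⟪gradient g y, x - y⟫ = 0 := by linarith
    rw [hgeq x y, hD]
    simp
  · have hCne : C ≠ 0 := ne_of_gt hC
    set w := gradient g x - gradient g y with hw
    set z := x - (1 / C) • w with hz
    have hdesc := descent_lemma hg hL x z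
    have hcvx := convex_grad_ineq hconv hg y z
    have e1 : z - x = -((1 / C) • w) := by rw [hz]; abel
    have e2 : ‖z - x‖ ^ 2 = (1 / C) ^ 2 * ‖w‖ ^ 2 := by
      rw [e1, norm_neg, norm_smul, mul_pow, Real.norm_eq_abs, sq_abs]
    have e3 : ⟪gradient g x, z - x⟫ = -(1 / C * ⟪gradient g x, w⟫) := by
      rw [e1, inner_neg_right, real_inner_smul_right]
    have e4 : z - y = (x - y) - (1 / C) • w := by rw [hz]; abel
    have e5 : ⟪gradient g y, z - y⟫ = ⟪gradient g y, x - y⟫ - 1 / C * ⟪gradient g y, w⟫ := by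
      rw [e4, inner_sub_right, real_inner_smul_right]
    have e6 : ⟪gradient g x, w⟫ - ⟪gradient g y, w⟫ = ‖w‖ ^ 2 := by
      rw [← inner_sub_left, ← hw, real_inner_self_eq_norm_sq]
    rw [e3, e2] at hdesc
    rw [e5] at hcvx
    have e7 : 1 / C * ⟪gradient g x, w⟫ - 1 / C * ⟪gradient g y, w⟫ = 1 / C * ‖w‖ ^ 2 := by
      rw [← mul_sub, e6]
    have e8 : C / 2 * ((1 / C) ^ 2 * ‖w‖ ^ 2) = 1 / (2 * C) * ‖w‖ ^ 2 := by
      field_simp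
    have e9 : 1 / C * ‖w‖ ^ 2 = 2 * (1 / (2 * C) * ‖w‖ ^ 2) := by
      field_simp
    have hD : 1 / (2 * C) * ‖w‖ ^ 2 ≤ g x - g y - ⟪gradient g y, x - y⟫ := by linarith
    have h2 := mul_le_mul_of_nonneg_left hD (by positivity : (0:ℝ) ≤ 2 * C)
    have e10 : 2 * C * (1 / (2 * C) * ‖w‖ ^ 2) = ‖w‖ ^ 2 := by field_simp
    linarith

lemma convexOn_finset_sum {ι : Type*} (s : Finset ι) (f : ι → E → ℝ)
    (h : ∀ i ∈ s, ConvexOn ℝ univ (f i)) :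
    ConvexOn ℝ univ (fun x => ∑ i ∈ s, f i x) := by
  classical
  induction s using Finset.induction_on with
  | empty => simpa using convexOn_const (0:ℝ) convex_univ
  | insert a t hnotmem ih =>
    simp only [Finset.sum_insert hnotmem]
    exact (h a (Finset.mem_insert_self a t)).add
      (ih fun i hi => h i (Finset.mem_insert_of_mem hi))

theorem cdgd_drift_bound {d n : ℕ} (hn : 0 < n)
    (fi : Fin n → EuclideanSpace ℝ (Fin d) → ℝ) (f : EuclideanSpace ℝ (Fin d) → ℝ)
    (L Lmax : ℝ)
    (hconv : ∀ i, ConvexOn ℝ Set.univ (fi i)) (hdiff : ∀ i, Differentiable ℝ (fi i))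
    (hLi : ∀ i x y, ‖gradient (fi i) x - gradient (fi i) y‖ ≤ Lmax * ‖x - y‖)
    (hLf : ∀ x y, ‖gradient f x - gradient f y‖ ≤ L * ‖x - y‖)
    (hf : ∀ x, f x = (1 / n : ℝ) * ∑ i, fi i x)
    (xstar : EuclideanSpace ℝ (Fin d)) (hxstar : ∀ y, f xstar ≤ f y)
    (x : EuclideanSpace ℝ (Fin d)) (ω : ℝ) (hω : 0 ≤ ω) :
    ‖gradient f x‖ ^ 2 + ω / (n : ℝ) ^ 2 * ∑ i, ‖gradient (fi i) x‖ ^ 2 ≤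
      2 * (L + 2 * ω * Lmax / n) * (f x - f xstar) +
        2 * ω / n * ((1 / n : ℝ) * ∑ i, ‖gradient (fi i) xstar‖ ^ 2) := by
  have hnR : (0:ℝ) < (n:ℝ) := Nat.cast_pos.mpr hn
  have hnne : (n:ℝ) ≠ 0 := ne_of_gt hnR
  have hfe : f = fun y => (1 / n : ℝ) * ∑ i, fi i y := funext hf
  have hdf : Differentiable ℝ f := by
    rw [hfe]
    exact (Differentiable.fun_sum fun i _ => hdiff i).const_mul _
  have hfconv : ConvexOn ℝ Set.univ f := by
    rw [hfe]
    have := (convexOn_finset_sum Finset.univ fi fun i _ => hconv i).smul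
      (by positivity : (0:ℝ) ≤ 1 / n)
    simpa [smul_eq_mul] using this
  have hg0 : gradient f xstar = 0 := gradient_min_zero hxstar
  -- sum of gradients at xstar is zero
  have hF : HasFDerivAt f
      ((1 / n : ℝ) • ∑ i, (InnerProductSpace.toDual ℝ _) (gradient (fi i) xstar)) xstar := by
    rw [hfe]
    exact HasFDerivAt.const_mul
      (HasFDerivAt.fun_sum fun i _ => ((hdiff i xstar).hasGradientAt).hasFDerivAt) _
  have hgradf : HasGradientAt f ((1 / n : ℝ) • ∑ i, gradient (fi i) xstar) xstar := by
    rw [hasGradientAt_iff_hasFDerivAt, map_smulₛₗ, map_sum, conj_trivial]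
    exact hF
  have hsum0 : ∑ i, gradient (fi i) xstar = 0 := by
    have h0 : (1 / n : ℝ) • ∑ i, gradient (fi i) xstar = 0 := by
      rw [← hgradf.gradient, hg0]
    rcases smul_eq_zero.mp h0 with h | h
    · exact absurd h (by positivity)
    · exact h
  -- piece 1
  have h1 : ‖gradient f x‖ ^ 2 ≤ 2 * L * (f x - f xstar) := by
    have := coco hfconv hdf hLf x xstar
    simpa [hg0] using this
  -- piece 2
  have h2 : ∀ i, ‖gradient (fi i) x‖ ^ 2 ≤
      2 * ‖gradient (fi i) x - gradient (fi i) xstar‖ ^ 2 +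
      2 * ‖gradient (fi i) xstar‖ ^ 2 := by
    intro i
    have htri := norm_add_le (gradient (fi i) x - gradient (fi i) xstar) (gradient (fi i) xstar)
    rw [sub_add_cancel] at htri
    have hsq := pow_le_pow_left₀ (norm_nonneg _) htri 2
    nlinarith [hsq, sq_nonneg (‖gradient (fi i) x - gradient (fi i) xstar‖ -
      ‖gradient (fi i) xstar‖)]
  -- piece 3: sum of Bregman bounds
  have hS : ∑ i, ‖gradient (fi i) x - gradient (fi i) xstar‖ ^ 2 ≤
      2 * Lmax * ((n:ℝ) * (f x - f xstar)) := by
    have h3 : ∀ i, ‖gradient (fi i) x - gradient (fi i) xstar‖ ^ 2 ≤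
        2 * Lmax * (fi i x - fi i xstar - ⟪gradient (fi i) xstar, x - xstar⟫) :=
      fun i => coco (hconv i) (hdiff i) (hLi i) x xstar
    calc ∑ i, ‖gradient (fi i) x - gradient (fi i) xstar‖ ^ 2
        ≤ ∑ i, 2 * Lmax * (fi i x - fi i xstar - ⟪gradient (fi i) xstar, x - xstar⟫) :=
          Finset.sum_le_sum fun i _ => h3 i
      _ = 2 * Lmax * ((n:ℝ) * (f x - f xstar)) := by
          rw [← Finset.mul_sum]
          congr 1
          have hinner : ∑ i, ⟪gradient (fi i) xstar, x - xstar⟫ = 0 := by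
            rw [← sum_inner, hsum0, inner_zero_left]
          have hsx : ∑ i, fi i x = (n:ℝ) * f x := by
            rw [hf x]; field_simp
          have hsxs : ∑ i, fi i xstar = (n:ℝ) * f xstar := by
            rw [hf xstar]; field_simp
          rw [Finset.sum_sub_distrib, Finset.sum_sub_distrib, hinner, hsx, hsxs]
          ring
  -- combine
  have hA : ∑ i, ‖gradient (fi i) x‖ ^ 2 ≤
      2 * (∑ i, ‖gradient (fi i) x - gradient (fi i) xstar‖ ^ 2) +
      2 * (∑ i, ‖gradient (fi i) xstar‖ ^ 2) := by
    calc ∑ i, ‖gradient (fi i) x‖ ^ 2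
        ≤ ∑ i, (2 * ‖gradient (fi i) x - gradient (fi i) xstar‖ ^ 2 +
            2 * ‖gradient (fi i) xstar‖ ^ 2) := Finset.sum_le_sum fun i _ => h2 i
      _ = _ := by rw [Finset.sum_add_distrib, ← Finset.mul_sum, ← Finset.mul_sum]
  set S := ∑ i, ‖gradient (fi i) x - gradient (fi i) xstar‖ ^ 2 with hSdef
  set A := ∑ i, ‖gradient (fi i) x‖ ^ 2 with hAdef
  set B := ∑ i, ‖gradient (fi i) xstar‖ ^ 2 with hBdef
  have hων : (0:ℝ) ≤ ω / (n:ℝ) ^ 2 := by positivity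
  have k1 := mul_le_mul_of_nonneg_left hA hων
  have k2 := mul_le_mul_of_nonneg_left hS (by positivity : (0:ℝ) ≤ 2 * (ω / (n:ℝ) ^ 2))
  have eqA : 2 * (ω / (n:ℝ) ^ 2) * (2 * Lmax * ((n:ℝ) * (f x - f xstar))) =
      2 * (2 * ω * Lmax / (n:ℝ)) * (f x - f xstar) := by
    field_simp
  have eqB : ω / (n:ℝ) ^ 2 * (2 * B) = 2 * ω / (n:ℝ) * ((1 / (n:ℝ)) * B) := by
    field_simp
  nlinarith [h1, k1, k2, eqA, eqB]
end

section
/- One-step SGD distance recursion: let f : ℝ^d → ℝ be differentiable and μ-strongly convex with minimizer x*, let x ∈ ℝ^d, γ > 0, and let g be a square-integrable random vector with E[g] = ∇f(x) and E‖g‖² ≤ 2A(f(x) − f(x*)) + D. Then E‖x − γg − x*‖² ≤ (1 − γμ)‖x − x*‖² − 2γ(1 − Aγ)(f(x) − f(x*)) + Dγ². -/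
/-!
Expand the square: in mean, the cross term of `‖(x - x*) - γ g‖²` is `-2γ⟪x - x*, ∇f(x)⟫`, which
strong convexity (applied at `x` towards `x*`) bounds by `-2γ (f(x) - f(x*) + (μ/2)‖x - x*‖²)`,
and the quadratic term `γ² E‖g‖²` is bounded by the second-moment hypothesis.
-/

open MeasureTheory RealInnerProductSpace

theorem integral_norm_sub_smul_sq {Ω E : Type*} [MeasurableSpace Ω] {P : Measure Ω}
    [IsProbabilityMeasure P] [NormedAddCommGroup E] [InnerProductSpace ℝ E] [CompleteSpace E]
    (v : E) (γ : ℝ) {g : Ω → E} (hg : Integrable g P)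
    (hg2 : Integrable (fun ω => ‖g ω‖ ^ 2) P) :
    ∫ ω, ‖v - γ • g ω‖ ^ 2 ∂P =
      ‖v‖ ^ 2 - 2 * γ * ⟪v, ∫ ω, g ω ∂P⟫ + γ ^ 2 * ∫ ω, ‖g ω‖ ^ 2 ∂P := by
  have hinner : Integrable (fun ω => ⟪v, g ω⟫) P := hg.const_inner v
  have hpointwise : ∀ ω, ‖v - γ • g ω‖ ^ 2 = ‖v‖ ^ 2 - 2 * γ * ⟪v, g ω⟫ + γ ^ 2 * ‖g ω‖ ^ 2 := by
    intro ω
    rw [norm_sub_sq_real, real_inner_smul_right, norm_smul, mul_pow, Real.norm_eq_abs, sq_abs]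
    ring
  simp_rw [hpointwise]
  rw [integral_add, integral_sub, integral_const, integral_const_mul, integral_const_mul,
    integral_inner hg]
  · simp
  · exact integrable_const _
  · exact hinner.const_mul _
  · exact (integrable_const _).sub (hinner.const_mul _)
  · exact hg2.const_mul _

theorem sgd_one_step_recursion_general {Ω : Type*} [MeasurableSpace Ω] (P : Measure Ω)
    [IsProbabilityMeasure P] {d : ℕ} (f : EuclideanSpace ℝ (Fin d) → ℝ) (μ A D γ : ℝ)
    (hsc : ∀ x y, f y ≥ f x + ⟪gradient f x, y - x⟫ + μ / 2 * ‖y - x‖ ^ 2)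
    (xstar : EuclideanSpace ℝ (Fin d))
    (x : EuclideanSpace ℝ (Fin d)) (hγ : 0 < γ)
    (g : Ω → EuclideanSpace ℝ (Fin d))
    (hint : Integrable g P) (hint2 : Integrable (fun ω => ‖g ω‖ ^ 2) P)
    (hmean : ∫ ω, g ω ∂P = gradient f x)
    (hsecond : ∫ ω, ‖g ω‖ ^ 2 ∂P ≤ 2 * A * (f x - f xstar) + D) :
    ∫ ω, ‖x - γ • g ω - xstar‖ ^ 2 ∂P ≤
      (1 - γ * μ) * ‖x - xstar‖ ^ 2 - 2 * γ * (1 - A * γ) * (f x - f xstar) + D * γ ^ 2 := by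
  have hinner_grad : f x - f xstar + μ / 2 * ‖x - xstar‖ ^ 2 ≤ ⟪x - xstar, gradient f x⟫ := by
    have h := hsc x xstar
    rw [← neg_sub x xstar, inner_neg_right, norm_neg, real_inner_comm] at h
    linarith
  have hexpand : ∫ ω, ‖x - γ • g ω - xstar‖ ^ 2 ∂P =
      ‖x - xstar‖ ^ 2 - 2 * γ * ⟪x - xstar, gradient f x⟫ + γ ^ 2 * ∫ ω, ‖g ω‖ ^ 2 ∂P := by
    rw [← hmean, ← integral_norm_sub_smul_sq _ γ hint hint2]
    simp_rw [sub_right_comm x]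
  rw [hexpand]
  linarith [mul_le_mul_of_nonneg_left hinner_grad hγ.le,
    mul_le_mul_of_nonneg_left hsecond (sq_nonneg γ)]

theorem sgd_one_step_recursion {Ω : Type*} [MeasurableSpace Ω] (P : Measure Ω)
    [IsProbabilityMeasure P] {d : ℕ} (f : EuclideanSpace ℝ (Fin d) → ℝ) (μ A D γ : ℝ)
    (hf : Differentiable ℝ f)
    (hsc : ∀ x y, f y ≥ f x + ⟪gradient f x, y - x⟫ + μ / 2 * ‖y - x‖ ^ 2)
    (xstar : EuclideanSpace ℝ (Fin d)) (hxstar : ∀ y, f xstar ≤ f y)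
    (x : EuclideanSpace ℝ (Fin d)) (hγ : 0 < γ) (hA : 0 ≤ A) (hD : 0 ≤ D)
    (g : Ω → EuclideanSpace ℝ (Fin d))
    (hint : Integrable g P) (hint2 : Integrable (fun ω => ‖g ω‖ ^ 2) P)
    (hmean : ∫ ω, g ω ∂P = gradient f x)
    (hsecond : ∫ ω, ‖g ω‖ ^ 2 ∂P ≤ 2 * A * (f x - f xstar) + D) :
    ∫ ω, ‖x - γ • g ω - xstar‖ ^ 2 ∂P ≤
      (1 - γ * μ) * ‖x - xstar‖ ^ 2 - 2 * γ * (1 - A * γ) * (f x - f xstar) + D * γ ^ 2 :=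
  sgd_one_step_recursion_general P f μ A D γ hsc xstar x hγ g hint hint2 hmean hsecond
end
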